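/- If |Aβ* − a|_∞ ≤ λ/2, then every global minimizer β̂ of F satisfies |β̂ − β*|₁ ≤ 4 √s · |β̂ − β*|₂. -/

import Mathlib

/-!
With `h = β̂ - β*`, comparing `F β̂ ≤ F β*` gives the basic inequality
`½ hᵀAh + hᵀ(Aβ* - a) + λ(|β̂|₁ - |β*|₁) ≤ 0`. The quadratic term is nonnegative, the noise term is
at least `-(λ/2)|h|₁`, and the reverse triangle inequality on `S` gives
`|β̂|₁ - |β*|₁ ≥ |h_{Sᶜ}|₁ - |h_S|₁`; together these force the cone condition
`|h_{Sᶜ}|₁ ≤ 3 |h_S|₁`. Hence `|h|₁ ≤ 4 |h_S|₁ ≤ 4 √s |h|₂` by Cauchy–Schwarz on `S`.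
-/

open Matrix Finset

noncomputable def l1 {p : ℕ} (v : Fin p → ℝ) : ℝ := ∑ j, |v j|

noncomputable def l2 {p : ℕ} (v : Fin p → ℝ) : ℝ := Real.sqrt (∑ j, (v j) ^ 2)

noncomputable def Fobj {p : ℕ} (A : Matrix (Fin p) (Fin p) ℝ) (a : Fin p → ℝ)
    (lam : ℝ) (β : Fin p → ℝ) : ℝ :=
  (1 / 2) * (β ⬝ᵥ A.mulVec β) - β ⬝ᵥ a + lam * l1 β

noncomputable def supp {p : ℕ} (v : Fin p → ℝ) : Finset (Fin p) :=
  Finset.univ.filter fun j => v j ≠ 0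

lemma Matrix.IsSymm.dotProduct_mulVec_comm {n R : Type*} [Fintype n] [CommSemiring R]
    {A : Matrix n n R} (hA : A.IsSymm) (u v : n → R) :
    u ⬝ᵥ A *ᵥ v = v ⬝ᵥ A *ᵥ u := by
  rw [dotProduct_mulVec, ← mulVec_transpose, hA.eq, dotProduct_comm]

section Lasso

variable {p : ℕ}

lemma l1_eq_sum_add_sum_compl (S : Finset (Fin p)) (v : Fin p → ℝ) :
    l1 v = ∑ j ∈ S, |v j| + ∑ j ∈ Sᶜ, |v j| :=
  (sum_add_sum_compl S _).symm

lemma abs_dotProduct_le_mul_l1 {c : ℝ} (v w : Fin p → ℝ) (hw : ∀ j, |w j| ≤ c) :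
    |v ⬝ᵥ w| ≤ c * l1 v :=
  calc |v ⬝ᵥ w| ≤ ∑ j, |v j * w j| := abs_sum_le_sum_abs _ _
    _ ≤ ∑ j, |v j| * c := sum_le_sum fun j _ => by
      rw [abs_mul]; exact mul_le_mul_of_nonneg_left (hw j) (abs_nonneg _)
    _ = c * l1 v := by rw [l1, ← sum_mul, mul_comm]

lemma sum_abs_le_sqrt_card_mul_l2 (S : Finset (Fin p)) (v : Fin p → ℝ) :
    ∑ j ∈ S, |v j| ≤ √(#S) * l2 v :=
  calc ∑ j ∈ S, |v j| = ∑ j ∈ S, 1 * |v j| := by simp only [one_mul]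
    _ ≤ √(∑ j ∈ S, 1 ^ 2) * √(∑ j ∈ S, |v j| ^ 2) := Real.sum_mul_le_sqrt_mul_sqrt _ _ _
    _ ≤ √(#S) * l2 v := by
      simp only [one_pow, sum_const, nsmul_eq_mul, mul_one, sq_abs, l2]
      gcongr
      exact subset_univ S

lemma l1_sub_add_le_l1_add (b h : Fin p → ℝ) :
    l1 b - ∑ j ∈ supp b, |h j| + ∑ j ∈ (supp b)ᶜ, |h j| ≤ l1 (b + h) := by
  have hb : ∀ j ∈ (supp b)ᶜ, b j = 0 := by simp [supp]
  have on_supp : ∑ j ∈ supp b, |b j| - ∑ j ∈ supp b, |h j| ≤ ∑ j ∈ supp b, |(b + h) j| := by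
    rw [← sum_sub_distrib]
    exact sum_le_sum fun j _ => abs_sub_abs_le_abs_add (b j) (h j)
  have off_supp : ∑ j ∈ (supp b)ᶜ, |(b + h) j| = ∑ j ∈ (supp b)ᶜ, |h j| :=
    sum_congr rfl fun j hj => by simp [hb j hj]
  have off_supp_b : ∑ j ∈ (supp b)ᶜ, |b j| = 0 :=
    sum_eq_zero fun j hj => by simp [hb j hj]
  rw [l1_eq_sum_add_sum_compl (supp b) b, l1_eq_sum_add_sum_compl (supp b) (b + h)]
  linarith

lemma Fobj_add_sub_Fobj {A : Matrix (Fin p) (Fin p) ℝ} (hA : A.IsSymm)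
    (a b h : Fin p → ℝ) (lam : ℝ) :
    Fobj A a lam (b + h) - Fobj A a lam b =
      1 / 2 * (h ⬝ᵥ A *ᵥ h) + h ⬝ᵥ (A *ᵥ b - a) + lam * (l1 (b + h) - l1 b) := by
  simp only [Fobj, mulVec_add, dotProduct_add, add_dotProduct, dotProduct_sub,
    hA.dotProduct_mulVec_comm b h]
  ring

theorem lasso_cone {A : Matrix (Fin p) (Fin p) ℝ} (hA : A.PosSemidef) {a βstar βhat : Fin p → ℝ}
    {lam : ℝ} (hlam : 0 < lam) (hnoise : ∀ j, |(A *ᵥ βstar - a) j| ≤ lam / 2)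
    (hle : Fobj A a lam βhat ≤ Fobj A a lam βstar) :
    ∑ j ∈ (supp βstar)ᶜ, |(βhat - βstar) j| ≤ 3 * ∑ j ∈ supp βstar, |(βhat - βstar) j| := by
  set h := βhat - βstar
  have hβhat : βhat = βstar + h := (add_sub_cancel βstar βhat).symm
  have basic : 1 / 2 * (h ⬝ᵥ A *ᵥ h) + h ⬝ᵥ (A *ᵥ βstar - a)
      + lam * (l1 βhat - l1 βstar) ≤ 0 := by
    rw [hβhat, ← Fobj_add_sub_Fobj (isHermitian_iff_isSymm.mp hA.isHermitian), ← hβhat]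
    linarith
  have quad : 0 ≤ h ⬝ᵥ A *ᵥ h := hA.dotProduct_mulVec_nonneg h
  have noise_ge := neg_abs_le (h ⬝ᵥ (A *ᵥ βstar - a))
  have noise_abs_le := abs_dotProduct_le_mul_l1 h _ hnoise
  have norm := l1_sub_add_le_l1_add βstar h
  rw [← hβhat] at norm
  rw [l1_eq_sum_add_sum_compl (supp βstar) h] at noise_abs_le
  nlinarith [mul_le_mul_of_nonneg_left norm hlam.le]

theorem l1_le_four_mul_sqrt_card_mul_l2 {S : Finset (Fin p)} {v : Fin p → ℝ}
    (hcone : ∑ j ∈ Sᶜ, |v j| ≤ 3 * ∑ j ∈ S, |v j|) :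
    l1 v ≤ 4 * √(#S) * l2 v := by
  have := sum_abs_le_sqrt_card_mul_l2 S v
  rw [l1_eq_sum_add_sum_compl S]
  linarith

end Lasso

theorem stmt4_general {p : ℕ} (A : Matrix (Fin p) (Fin p) ℝ) (hA : A.PosSemidef)
    (a βstar : Fin p → ℝ) (lam : ℝ) (hlam : 0 < lam)
    (h1 : ∀ j, |(A.mulVec βstar - a) j| ≤ lam / 2)
    (βhat : Fin p → ℝ) (hmin : ∀ β, Fobj A a lam βhat ≤ Fobj A a lam β) :
    l1 (βhat - βstar) ≤ 4 * Real.sqrt ((supp βstar).card) * l2 (βhat - βstar) :=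
  l1_le_four_mul_sqrt_card_mul_l2 (lasso_cone hA hlam h1 (hmin βstar))

/-- if `|Aβ* − a|_∞ ≤ λ/2`, then every global minimizer `β̂` of `F`
satisfies `|β̂ − β*|₁ ≤ 4 √s |β̂ − β*|₂`, where `s = |S|`. -/
theorem stmt4 {p : ℕ} (hp : 1 ≤ p) (A : Matrix (Fin p) (Fin p) ℝ) (hA : A.PosSemidef)
    (a βstar : Fin p → ℝ) (lam : ℝ) (hlam : 0 < lam)
    (h1 : ∀ j, |(A.mulVec βstar - a) j| ≤ lam / 2)
    (βhat : Fin p → ℝ) (hmin : ∀ β, Fobj A a lam βhat ≤ Fobj A a lam β) :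
    l1 (βhat - βstar) ≤ 4 * Real.sqrt ((supp βstar).card) * l2 (βhat - βstar) :=
  stmt4_general A hA a βstar lam hlam h1 βhat hmin
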